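/- arXiv:2104.05802 — 4 statements merged into one kernel-verified Lean document; each statement's English description precedes it below -/
import Mathlib

section
/- Let m, n ≥ 1, μ ∈ ℝ^m and ν ∈ ℝⁿ be probability vectors, C = (c_{ij}) ∈ ℝ^{m×n}, λ > 0, and let E_λ(ψ) = λ Σ_{i=1}^m μ_i log(Σ_{j=1}^n e^{(ψ_j − c_{ij})/λ}) − Σ_{j=1}^n ν_j ψ_j − λ log n. Suppose ψ* ∈ ℝⁿ is a critical point of E_λ (i.e., ∇E_λ(ψ*) = 0; in particular any minimizer of E_λ). Then the matrix P* with entries P*_{ij} = μ_i · e^{(ψ*_j − c_{ij})/λ} / (Σ_{k=1}^n e^{(ψ*_k − c_{ik})/λ}) belongs to the admissible set π(μ, ν): it has nonnegative entries, Σ_{j=1}^n P*_{ij} = μ_i for every i, and Σ_{i=1}^m P*_{ij} = ν_j for every j. -/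
/-!
Write `w_i = softmax((ψ - c_i)/λ)` for the Gibbs weights of row `i`, so that `P*_{ij} = μ_i w_{ij}`.
Nonnegativity and the row sums `μ_i` hold for any `ψ`, since each `w_i` is a probability vector.
The column sums come from criticality: the gradient of `λ log ∑_j e^{(ψ_j - c_{ij})/λ}` is `w_i`,
so `∂E_λ/∂ψ_j = ∑_i μ_i w_{ij} - ν_j`, and this vanishes at `ψ*`.
-/

open Real ContinuousLinearMap

namespace Kantorovich

variable {ι κ : Type*} [Fintype ι] [Fintype κ]

noncomputable def gibbsWeights (c : ι → ℝ) (lam : ℝ) (ψ : ι → ℝ) (j : ι) : ℝ :=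
  exp ((ψ j - c j) / lam) / ∑ k, exp ((ψ k - c k) / lam)

lemma gibbsWeights_nonneg (c : ι → ℝ) (lam : ℝ) (ψ : ι → ℝ) (j : ι) :
    0 ≤ gibbsWeights c lam ψ j :=
  div_nonneg (exp_pos _).le (Finset.sum_nonneg fun _ _ => (exp_pos _).le)

lemma sum_exp_pos [Nonempty ι] (c : ι → ℝ) (lam : ℝ) (ψ : ι → ℝ) :
    0 < ∑ k, exp ((ψ k - c k) / lam) :=
  Finset.sum_pos (fun _ _ => exp_pos _) Finset.univ_nonempty

lemma sum_gibbsWeights [Nonempty ι] (c : ι → ℝ) (lam : ℝ) (ψ : ι → ℝ) :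
    ∑ j, gibbsWeights c lam ψ j = 1 := by
  simp only [gibbsWeights]
  rw [← Finset.sum_div, div_self (sum_exp_pos c lam ψ).ne']

lemma hasFDerivAt_log_sum_exp [Nonempty ι] (c : ι → ℝ) (lam : ℝ) (ψ : ι → ℝ) :
    HasFDerivAt (fun φ : ι → ℝ => log (∑ j, exp ((φ j - c j) / lam)))
      (∑ j, (lam⁻¹ * gibbsWeights c lam ψ j) • (proj j : (ι → ℝ) →L[ℝ] ℝ)) ψ := by
  have hexp : ∀ j, HasFDerivAt (fun φ : ι → ℝ => exp ((φ j - c j) / lam))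
      (exp ((ψ j - c j) / lam) • lam⁻¹ • (proj j : (ι → ℝ) →L[ℝ] ℝ)) ψ := fun j => by
    simpa [div_eq_inv_mul] using
      ((((proj j : (ι → ℝ) →L[ℝ] ℝ).hasFDerivAt).sub_const (c j)).const_mul lam⁻¹).exp
  refine ((HasFDerivAt.fun_sum fun j _ => hexp j).log (sum_exp_pos c lam ψ).ne').congr_fderiv ?_
  ext v
  simp only [smul_apply, sum_apply, proj_apply, smul_eq_mul, Finset.mul_sum, gibbsWeights]
  exact Finset.sum_congr rfl fun _ _ => by ring

lemma hasFDerivAt_smoothed_dual [Nonempty ι] (μ : κ → ℝ) (ν : ι → ℝ) (C : κ → ι → ℝ) {lam : ℝ}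
    (hlam : lam ≠ 0) (a : ℝ) (ψ : ι → ℝ) :
    HasFDerivAt (fun φ : ι → ℝ =>
        lam * ∑ i, μ i * log (∑ j, exp ((φ j - C i j) / lam)) - ∑ j, ν j * φ j - a)
      (∑ j, (∑ i, μ i * gibbsWeights (C i) lam ψ j - ν j) • (proj j : (ι → ℝ) →L[ℝ] ℝ)) ψ := by
  have hentropic := (HasFDerivAt.fun_sum fun i (_ : i ∈ Finset.univ) =>
    (hasFDerivAt_log_sum_exp (C i) lam ψ).const_mul (μ i)).const_mul lam
  have hlinear := HasFDerivAt.fun_sum fun j (_ : j ∈ Finset.univ) =>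
    ((proj j : (ι → ℝ) →L[ℝ] ℝ).hasFDerivAt (x := ψ)).const_mul (ν j)
  refine ((hentropic.sub hlinear).sub_const a).congr_fderiv ?_
  ext v
  simp only [sub_apply, smul_apply, sum_apply, proj_apply, smul_eq_mul, Finset.mul_sum, sub_mul,
    Finset.sum_mul, Finset.sum_sub_distrib, sub_left_inj]
  rw [Finset.sum_comm]
  refine Finset.sum_congr rfl fun j _ => Finset.sum_congr rfl fun i _ => ?_
  field_simp

lemma eq_zero_of_sum_smul_proj_eq_zero {g : ι → ℝ}
    (hg : (∑ j, g j • proj j : (ι → ℝ) →L[ℝ] ℝ) = 0) : g = 0 := by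
  classical
  funext j
  simpa [Pi.single_apply] using congrArg (· (Pi.single j 1)) hg

lemma sum_mul_gibbsWeights_of_fderiv_eq_zero [Nonempty ι] {μ : κ → ℝ} {ν : ι → ℝ}
    {C : κ → ι → ℝ} {lam : ℝ} (hlam : lam ≠ 0) {a : ℝ} {ψ : ι → ℝ}
    (hcrit : fderiv ℝ (fun φ : ι → ℝ =>
      lam * ∑ i, μ i * log (∑ j, exp ((φ j - C i j) / lam)) - ∑ j, ν j * φ j - a) ψ = 0)
    (j : ι) : ∑ i, μ i * gibbsWeights (C i) lam ψ j = ν j := by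
  have hgrad := eq_zero_of_sum_smul_proj_eq_zero <|
    (hasFDerivAt_smoothed_dual μ ν C hlam a ψ).fderiv.symm.trans hcrit
  exact sub_eq_zero.mp (congrFun hgrad j)

end Kantorovich

theorem critical_point_plan_admissible_general
    (m n : ℕ) (hn : 1 ≤ n)
    (μ : Fin m → ℝ) (ν : Fin n → ℝ)
    (hμ0 : ∀ i, 0 ≤ μ i)
    (C : Fin m → Fin n → ℝ) (lam : ℝ) (hlam : 0 < lam)
    (Elam : (Fin n → ℝ) → ℝ)
    (hElam : ∀ ψ, Elam ψ =
      lam * ∑ i, μ i * Real.log (∑ j, Real.exp ((ψ j - C i j) / lam))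
        - ∑ j, ν j * ψ j - lam * Real.log n)
    (ψs : Fin n → ℝ) (hcrit : fderiv ℝ Elam ψs = 0)
    (P : Fin m → Fin n → ℝ)
    (hP : ∀ i j, P i j = μ i * (Real.exp ((ψs j - C i j) / lam) /
      ∑ k, Real.exp ((ψs k - C i k) / lam))) :
    (∀ i j, 0 ≤ P i j) ∧ (∀ i, ∑ j, P i j = μ i) ∧ ∀ j, ∑ i, P i j = ν j := by
  have : Nonempty (Fin n) := ⟨⟨0, hn⟩⟩
  obtain rfl : P = fun i j => μ i * Kantorovich.gibbsWeights (C i) lam ψs j :=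
    funext fun i => funext (hP i)
  obtain rfl : Elam = _ := funext hElam
  refine ⟨fun i j => mul_nonneg (hμ0 i) (Kantorovich.gibbsWeights_nonneg _ _ _ _), fun i => ?_,
    Kantorovich.sum_mul_gibbsWeights_of_fderiv_eq_zero hlam.ne' hcrit⟩
  rw [← Finset.mul_sum, Kantorovich.sum_gibbsWeights, mul_one]

/-- If `ψ*` is a critical point of the smoothed Kantorovich functional `E_λ`
(in particular, any minimizer), then the induced plan
`P*_{ij} = μ_i e^{(ψ*_j - c_{ij})/λ} / (∑ k, e^{(ψ*_k - c_{ik})/λ})` lies in the admissible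
set `π(μ, ν)`: nonnegative entries, rows summing to `μ` and columns summing to `ν`. -/
theorem critical_point_plan_admissible
    (m n : ℕ) (hm : 1 ≤ m) (hn : 1 ≤ n)
    (μ : Fin m → ℝ) (ν : Fin n → ℝ)
    (hμ0 : ∀ i, 0 ≤ μ i) (hμ1 : ∑ i, μ i = 1)
    (hν0 : ∀ j, 0 ≤ ν j) (hν1 : ∑ j, ν j = 1)
    (C : Fin m → Fin n → ℝ) (lam : ℝ) (hlam : 0 < lam)
    (Elam : (Fin n → ℝ) → ℝ)
    (hElam : ∀ ψ, Elam ψ =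
      lam * ∑ i, μ i * Real.log (∑ j, Real.exp ((ψ j - C i j) / lam))
        - ∑ j, ν j * ψ j - lam * Real.log n)
    (ψs : Fin n → ℝ) (hcrit : fderiv ℝ Elam ψs = 0)
    (P : Fin m → Fin n → ℝ)
    (hP : ∀ i j, P i j = μ i * (Real.exp ((ψs j - C i j) / lam) /
      ∑ k, Real.exp ((ψs k - C i k) / lam))) :
    (∀ i j, 0 ≤ P i j) ∧ (∀ i, ∑ j, P i j = μ i) ∧ ∀ j, ∑ i, P i j = ν j :=
  critical_point_plan_admissible_general m n hn μ ν hμ0 C lam hlam Elam hElam ψs hcrit P hP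
end

section
/- Let m, n ≥ 1, let μ ∈ ℝ^m and ν ∈ ℝⁿ be probability vectors with all entries of μ nonnegative and at least one entry of μ positive, let C = (c_{ij}) ∈ ℝ^{m×n} and λ > 0, and let E_λ(ψ) = λ Σ_{i=1}^m μ_i log(Σ_{j=1}^n e^{(ψ_j − c_{ij})/λ}) − Σ_{j=1}^n ν_j ψ_j − λ log n. Then for every ψ ∈ ℝⁿ and every nonzero u ∈ ℝⁿ with Σ_{j=1}^n u_j = 0, the second derivative of E_λ at ψ in the direction u is strictly positive: uᵀ ∇²E_λ(ψ) u > 0. In particular, E_λ is strictly convex on the hyperplane H = {ψ ∈ ℝⁿ : Σ_j ψ_j = 0}. -/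
/-! Along a line `ψ + t • u`, the `i`-th log-sum-exp term of `E_λ` has second derivative
`λ⁻²` times the variance of `u` under the softmax weights `p_i(t)`, which are all positive. The
variance vanishes only for constant `u`, and a constant `u` with `∑ j, u j = 0` is zero. Strict
convexity on the hyperplane then follows by restricting `E_λ` to segments and applying the
one-variable second-derivative test. -/

open Finset Real

section LineRestriction

variable {E F : Type*} [NormedAddCommGroup E] [NormedSpace ℝ E]
  [NormedAddCommGroup F] [NormedSpace ℝ F]

theorem deriv_deriv_comp_add_smul {f : E → F} (hf : ContDiff ℝ 2 f) (x u : E) (t : ℝ) :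
    deriv (deriv fun s : ℝ => f (x + s • u)) t = fderiv ℝ (fderiv ℝ f) (x + t • u) u u := by
  have hline : ∀ s : ℝ, HasDerivAt (fun s : ℝ => x + s • u) u s := fun s => by
    simpa using ((hasDerivAt_id s).smul_const u).const_add x
  have hf' : Differentiable ℝ (fderiv ℝ f) :=
    (hf.fderiv_right (m := 1) (by norm_num)).differentiable one_ne_zero
  have hderiv : deriv (fun s : ℝ => f (x + s • u)) = fun s => fderiv ℝ f (x + s • u) u :=
    funext fun s => ((hf.differentiable two_ne_zero _).hasFDerivAt.comp_hasDerivAt s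
      (hline s)).deriv
  rw [hderiv]
  exact (((hf' _).hasFDerivAt.comp_hasDerivAt t (hline t)).clm_apply
    (hasDerivAt_const t u)).deriv.trans (by simp)

theorem strictConvexOn_of_fderiv_fderiv_pos {f : E → ℝ} {s : Set E} (hf : ContDiff ℝ 2 f)
    (hs : Convex ℝ s)
    (hpos : ∀ z, ∀ x ∈ s, ∀ y ∈ s, x ≠ y → 0 < fderiv ℝ (fderiv ℝ f) z (y - x) (y - x)) :
    StrictConvexOn ℝ s f := by
  refine ⟨hs, fun x hx y hy hxy a b ha hb hab => ?_⟩
  have hline : StrictConvexOn ℝ Set.univ fun t : ℝ => f (x + t • (y - x)) := by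
    refine strictConvexOn_univ_of_deriv2_pos (by fun_prop) fun t => ?_
    rw [Function.iterate_succ_apply, Function.iterate_one, deriv_deriv_comp_add_smul hf]
    exact hpos _ x hx y hy hxy
  have key := hline.2 (Set.mem_univ 0) (Set.mem_univ 1) zero_ne_one ha hb hab
  have hb' : a • x + b • y = x + b • (y - x) := by
    obtain rfl : a = 1 - b := by linarith
    module
  simpa [hb'] using key

end LineRestriction

section Softmax

variable {ι : Type*} [Fintype ι]

noncomputable def softmax (x : ι → ℝ) (j : ι) : ℝ := exp (x j) / ∑ k, exp (x k)

noncomputable def weightedVariance (p b : ι → ℝ) : ℝ := ∑ j, p j * (b j - ∑ k, p k * b k) ^ 2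

theorem sum_exp_pos [Nonempty ι] (x : ι → ℝ) : 0 < ∑ k, exp (x k) :=
  sum_pos (fun _ _ => exp_pos _) univ_nonempty

theorem softmax_pos [Nonempty ι] (x : ι → ℝ) (j : ι) : 0 < softmax x j :=
  div_pos (exp_pos _) (sum_exp_pos x)

theorem sum_softmax [Nonempty ι] (x : ι → ℝ) : ∑ j, softmax x j = 1 := by
  simp only [softmax]
  rw [← sum_div, div_self (sum_exp_pos x).ne']

theorem sum_mul_sub_mean_mul_self {p : ι → ℝ} (hp : ∑ j, p j = 1) (b : ι → ℝ) :
    ∑ j, p j * (b j - ∑ k, p k * b k) * b j = weightedVariance p b := by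
  set m := ∑ k, p k * b k
  have hcentred : ∑ j, p j * (b j - m) = 0 := by
    simp [mul_sub, sum_sub_distrib, ← sum_mul, hp, m]
  rw [weightedVariance, ← sub_eq_zero, ← sum_sub_distrib]
  calc ∑ j, (p j * (b j - m) * b j - p j * (b j - m) ^ 2)
      = (∑ j, p j * (b j - m)) * m := by rw [sum_mul]; exact sum_congr rfl fun j _ => by ring
    _ = 0 := by rw [hcentred, zero_mul]

theorem weightedVariance_pos {p b : ι → ℝ} (hp : ∀ j, 0 < p j) (hb : b ≠ 0)
    (hsum : ∑ j, b j = 0) : 0 < weightedVariance p b := by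
  set m := ∑ k, p k * b k
  obtain ⟨j, hj⟩ : ∃ j, b j ≠ m := by
    by_contra! hconst
    have hm : (Fintype.card ι : ℝ) * m = 0 := by simpa [hconst] using hsum
    obtain ⟨j, -⟩ := Function.ne_iff.mp hb
    have : Nonempty ι := ⟨j⟩
    have hm0 : m = 0 := (mul_eq_zero.mp hm).resolve_left (by positivity)
    exact hb (funext fun j => (hconst j).trans hm0)
  have hj' : b j - m ≠ 0 := sub_ne_zero.mpr hj
  exact sum_pos' (fun k _ => by have := hp k; positivity)
    ⟨j, mem_univ j, mul_pos (hp j) (by positivity)⟩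

variable (a b : ι → ℝ) (t : ℝ)

omit [Fintype ι] in
theorem hasDerivAt_exp_line (j : ι) :
    HasDerivAt (fun t : ℝ => exp ((a + t • b) j)) (exp ((a + t • b) j) * b j) t := by
  simpa using (((hasDerivAt_id t).mul_const (b j)).const_add (a j)).exp

variable [Nonempty ι]

theorem hasDerivAt_log_sum_exp_line :
    HasDerivAt (fun t : ℝ => log (∑ j, exp ((a + t • b) j)))
      (∑ j, softmax (a + t • b) j * b j) t := by
  convert (HasDerivAt.fun_sum fun j _ => hasDerivAt_exp_line a b t j).log
    (sum_exp_pos _).ne' using 1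
  simp only [softmax, div_mul_eq_mul_div, ← sum_div]

theorem hasDerivAt_softmax_line (j : ι) :
    HasDerivAt (fun t : ℝ => softmax (a + t • b) j)
      (softmax (a + t • b) j * (b j - ∑ k, softmax (a + t • b) k * b k)) t := by
  have hS := (sum_exp_pos (a + t • b)).ne'
  refine ((hasDerivAt_exp_line a b t j).fun_div
    (HasDerivAt.fun_sum fun k _ => hasDerivAt_exp_line a b t k) hS).congr_deriv ?_
  simp only [softmax, div_mul_eq_mul_div, ← sum_div]
  field_simp

theorem hasDerivAt_softmax_mean_line :
    HasDerivAt (fun t : ℝ => ∑ j, softmax (a + t • b) j * b j)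
      (weightedVariance (softmax (a + t • b)) b) t := by
  rw [← sum_mul_sub_mean_mul_self (sum_softmax _)]
  exact HasDerivAt.fun_sum fun j _ => (hasDerivAt_softmax_line a b t j).mul_const (b j)

end Softmax

section Kantorovich

variable {ι κ : Type*} [Fintype ι] [Fintype κ]

noncomputable def smoothedKantorovich (μ : κ → ℝ) (ν : ι → ℝ) (C : κ → ι → ℝ) (lam : ℝ)
    (ψ : ι → ℝ) : ℝ :=
  lam * ∑ i, μ i * log (∑ j, exp ((ψ j - C i j) / lam)) - ∑ j, ν j * ψ j
    - lam * log (Fintype.card ι)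

variable [Nonempty ι] (μ : κ → ℝ) (ν : ι → ℝ) (C : κ → ι → ℝ) (lam : ℝ)

theorem contDiff_smoothedKantorovich {n : WithTop ℕ∞} :
    ContDiff ℝ n (smoothedKantorovich μ ν C lam) := by
  unfold smoothedKantorovich
  have : ∀ i, ContDiff ℝ n fun ψ : ι → ℝ => log (∑ j, exp ((ψ j - C i j) / lam)) :=
    fun i => ContDiff.log (by fun_prop) fun ψ => (sum_exp_pos _).ne'
  fun_prop

theorem deriv_deriv_smoothedKantorovich_line (ψ u : ι → ℝ) (t : ℝ) :
    deriv (deriv fun s : ℝ => smoothedKantorovich μ ν C lam (ψ + s • u)) t =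
      lam * ∑ i, μ i *
        weightedVariance (softmax (lam⁻¹ • (ψ - C i) + t • lam⁻¹ • u)) (lam⁻¹ • u) := by
  set a : κ → ι → ℝ := fun i => lam⁻¹ • (ψ - C i)
  set b : ι → ℝ := lam⁻¹ • u
  have hline : (fun s : ℝ => smoothedKantorovich μ ν C lam (ψ + s • u)) = fun s =>
      lam * ∑ i, μ i * log (∑ j, exp ((a i + s • b) j)) - (∑ j, ν j * ψ j + s * ∑ j, ν j * u j)
        - lam * log (Fintype.card ι) := by
    funext s
    simp only [smoothedKantorovich, a, b, Pi.add_apply, Pi.smul_apply, Pi.sub_apply, smul_eq_mul,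
      mul_add, sum_add_distrib, mul_sum]
    have hexponent : ∀ i j,
        (ψ j + s * u j - C i j) / lam = lam⁻¹ * (ψ j - C i j) + s * (lam⁻¹ * u j) :=
      fun i j => by ring
    simp only [hexponent, mul_left_comm s]
  have hderiv : deriv (fun s : ℝ => smoothedKantorovich μ ν C lam (ψ + s • u)) = fun s =>
      lam * ∑ i, μ i * ∑ j, softmax (a i + s • b) j * b j - ∑ j, ν j * u j := by
    rw [hline]
    funext s
    refine HasDerivAt.deriv ?_
    have hlog := (HasDerivAt.fun_sum (u := univ) fun i _ =>
      (hasDerivAt_log_sum_exp_line (a i) b s).const_mul (μ i)).const_mul lam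
    have hlinear := ((hasDerivAt_id s).mul_const (∑ j, ν j * u j)).const_add (∑ j, ν j * ψ j)
    simpa using (hlog.sub hlinear).sub_const (lam * log (Fintype.card ι))
  rw [hderiv]
  refine HasDerivAt.deriv ?_
  have hmean := (HasDerivAt.fun_sum (u := univ) fun i _ =>
    (hasDerivAt_softmax_mean_line (a i) b t).const_mul (μ i)).const_mul lam
  simpa using hmean.sub_const (∑ j, ν j * u j)

theorem deriv_deriv_smoothedKantorovich_line_pos (hlam : 0 < lam)
    (hμ0 : ∀ i, 0 ≤ μ i) (hμpos : ∃ i, 0 < μ i) (ψ : ι → ℝ) {u : ι → ℝ} (hu : u ≠ 0)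
    (hsum : ∑ j, u j = 0) (t : ℝ) :
    0 < deriv (deriv fun s : ℝ => smoothedKantorovich μ ν C lam (ψ + s • u)) t := by
  have hvar : ∀ i,
      0 < weightedVariance (softmax (lam⁻¹ • (ψ - C i) + t • lam⁻¹ • u)) (lam⁻¹ • u) :=
    fun i => weightedVariance_pos (softmax_pos _) (smul_ne_zero (inv_ne_zero hlam.ne') hu)
      (by simp [← mul_sum, hsum])
  obtain ⟨i, hi⟩ := hμpos
  rw [deriv_deriv_smoothedKantorovich_line]
  exact mul_pos hlam (sum_pos' (fun k _ => mul_nonneg (hμ0 k) (hvar k).le)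
    ⟨i, mem_univ i, mul_pos hi (hvar i)⟩)

end Kantorovich

theorem smoothed_kantorovich_strictly_convex_on_hyperplane_general
    (m n : ℕ) (hn : 1 ≤ n)
    (μ : Fin m → ℝ) (ν : Fin n → ℝ)
    (hμ0 : ∀ i, 0 ≤ μ i) (hμpos : ∃ i, 0 < μ i)
    (C : Fin m → Fin n → ℝ) (lam : ℝ) (hlam : 0 < lam)
    (Elam : (Fin n → ℝ) → ℝ)
    (hElam : ∀ ψ, Elam ψ =
      lam * ∑ i, μ i * Real.log (∑ j, Real.exp ((ψ j - C i j) / lam))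
        - ∑ j, ν j * ψ j - lam * Real.log n) :
    (∀ (ψ u : Fin n → ℝ), u ≠ 0 → ∑ j, u j = 0 →
        0 < fderiv ℝ (fderiv ℝ Elam) ψ u u) ∧
      StrictConvexOn ℝ {ψ : Fin n → ℝ | ∑ j, ψ j = 0} Elam := by
  have : Nonempty (Fin n) := ⟨⟨0, hn⟩⟩
  obtain rfl : Elam = smoothedKantorovich μ ν C lam :=
    funext fun ψ => by simp [hElam, smoothedKantorovich]
  have hsmooth := contDiff_smoothedKantorovich (n := 2) μ ν C lam
  have hpos : ∀ ψ u : Fin n → ℝ, u ≠ 0 → ∑ j, u j = 0 →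
      0 < fderiv ℝ (fderiv ℝ (smoothedKantorovich μ ν C lam)) ψ u u := fun ψ u hu hsum => by
    simpa [deriv_deriv_comp_add_smul hsmooth] using
      deriv_deriv_smoothedKantorovich_line_pos μ ν C lam hlam hμ0 hμpos ψ hu hsum 0
  have hconvex : Convex ℝ {ψ : Fin n → ℝ | ∑ j, ψ j = 0} := fun x hx y hy a b _ _ _ => by
    simp_all [sum_add_distrib, ← mul_sum]
  refine ⟨hpos, strictConvexOn_of_fderiv_fderiv_pos hsmooth hconvex fun z x hx y hy hxy => ?_⟩
  exact hpos z _ (sub_ne_zero.mpr hxy.symm) (by simp_all [sum_sub_distrib])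

/-- If all entries of `μ` are nonnegative and at least one is positive, then
for every `ψ` and every nonzero direction `u` with `∑ j, u_j = 0`, the second derivative of
the smoothed Kantorovich functional `E_λ` at `ψ` in the direction `u` is strictly positive;
in particular `E_λ` is strictly convex on the hyperplane `H = {ψ : ∑ j, ψ_j = 0}`. -/
theorem smoothed_kantorovich_strictly_convex_on_hyperplane
    (m n : ℕ) (hm : 1 ≤ m) (hn : 1 ≤ n)
    (μ : Fin m → ℝ) (ν : Fin n → ℝ)
    (hμ0 : ∀ i, 0 ≤ μ i) (hμ1 : ∑ i, μ i = 1) (hμpos : ∃ i, 0 < μ i)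
    (hν0 : ∀ j, 0 ≤ ν j) (hν1 : ∑ j, ν j = 1)
    (C : Fin m → Fin n → ℝ) (lam : ℝ) (hlam : 0 < lam)
    (Elam : (Fin n → ℝ) → ℝ)
    (hElam : ∀ ψ, Elam ψ =
      lam * ∑ i, μ i * Real.log (∑ j, Real.exp ((ψ j - C i j) / lam))
        - ∑ j, ν j * ψ j - lam * Real.log n) :
    (∀ (ψ u : Fin n → ℝ), u ≠ 0 → ∑ j, u j = 0 →
        0 < fderiv ℝ (fderiv ℝ Elam) ψ u u) ∧
      StrictConvexOn ℝ {ψ : Fin n → ℝ | ∑ j, ψ j = 0} Elam :=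
  smoothed_kantorovich_strictly_convex_on_hyperplane_general m n hn μ ν hμ0 hμpos C lam hlam Elam
    hElam
end

section
/- Let m, n ≥ 1, μ ∈ ℝ^m and ν ∈ ℝⁿ be probability vectors, C = (c_{ij}) ∈ ℝ^{m×n}, λ > 0. Define E(ψ) = Σ_{i=1}^m μ_i max_{1≤j≤n}(ψ_j − c_{ij}) − Σ_{j=1}^n ν_j ψ_j and E_λ(ψ) = λ Σ_{i=1}^m μ_i log(Σ_{j=1}^n e^{(ψ_j − c_{ij})/λ}) − Σ_{j=1}^n ν_j ψ_j − λ log n. If ψ* minimizes E over ℝⁿ and ψ_λ* minimizes E_λ over ℝⁿ, then |E(ψ*) − E_λ(ψ_λ*)| ≤ 2λ log n. -/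
/-!
Log-sum-exp is a uniform approximation of the maximum: for `f : ι → ℝ` with `ι` of size `n`,
`max f ≤ λ log Σ exp (f / λ) ≤ max f + λ log n`. Averaging over `i` with the probability
weights `μ` gives `E_λ ≤ E ≤ E_λ + λ log n` pointwise, and two functions that are uniformly
`c`-close in this one-sided sense have minimum values within `c` of each other.
-/

open Finset Real

section LogSumExp

variable {ι : Type*} [Fintype ι] (hne : (univ : Finset ι).Nonempty) (f : ι → ℝ) {lam : ℝ}

theorem sup'_le_mul_log_sum_exp_div (hlam : 0 < lam) :
    univ.sup' hne f ≤ lam * log (∑ j, exp (f j / lam)) := by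
  obtain ⟨j₀, -, hj₀⟩ := exists_mem_eq_sup' hne f
  have hsingle : exp (f j₀ / lam) ≤ ∑ j, exp (f j / lam) :=
    single_le_sum (f := fun j => exp (f j / lam)) (fun j _ => (exp_pos _).le) (mem_univ j₀)
  calc univ.sup' hne f = lam * log (exp (f j₀ / lam)) := by
        rw [hj₀, log_exp]; field_simp
    _ ≤ lam * log (∑ j, exp (f j / lam)) := by
        gcongr

theorem mul_log_sum_exp_div_le (hlam : 0 < lam) :
    lam * log (∑ j, exp (f j / lam)) ≤ univ.sup' hne f + lam * log (Fintype.card ι) := by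
  set M := univ.sup' hne f
  have hcard : (0 : ℝ) < Fintype.card ι := by
    exact_mod_cast Fintype.card_pos_iff.mpr (univ_nonempty_iff.mp hne)
  have hsum : ∑ j, exp (f j / lam) ≤ Fintype.card ι * exp (M / lam) := by
    calc ∑ j, exp (f j / lam) ≤ ∑ _j : ι, exp (M / lam) := by
          gcongr with j
          exact le_sup' f (mem_univ j)
      _ = Fintype.card ι * exp (M / lam) := by simp
  calc lam * log (∑ j, exp (f j / lam))
      ≤ lam * log (Fintype.card ι * exp (M / lam)) := by
        gcongr
    _ = M + lam * log (Fintype.card ι) := by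
        rw [log_mul hcard.ne' (exp_pos _).ne', log_exp]
        field_simp
        ring

end LogSumExp

theorem sum_mul_le_sum_mul_add_of_le_add {ι : Type*} [Fintype ι] {μ g h : ι → ℝ} {c : ℝ}
    (hμ0 : ∀ i, 0 ≤ μ i) (hμ1 : ∑ i, μ i = 1) (hgh : ∀ i, g i ≤ h i + c) :
    ∑ i, μ i * g i ≤ ∑ i, μ i * h i + c := by
  calc ∑ i, μ i * g i ≤ ∑ i, μ i * (h i + c) := by
        gcongr with i
        · exact hμ0 i
        · exact hgh i
    _ = ∑ i, μ i * h i + c := by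
        simp only [mul_add, sum_add_distrib, ← sum_mul, hμ1, one_mul]

theorem abs_sub_of_minimizers_le_of_le_of_le_add {α : Type*} {F G : α → ℝ} {c : ℝ}
    (hGF : ∀ x, G x ≤ F x) (hFG : ∀ x, F x ≤ G x + c) {a b : α}
    (ha : ∀ x, F a ≤ F x) (hb : ∀ x, G b ≤ G x) :
    |F a - G b| ≤ c := by
  have hc : 0 ≤ c := by linarith [hGF a, hFG a]
  rw [abs_le]
  constructor
  · linarith [hb a, hGF a]
  · linarith [ha b, hFG b]

theorem kantorovich_smoothing_approximation_error_general
    (m n : ℕ) (hn : 1 ≤ n)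
    (μ : Fin m → ℝ) (ν : Fin n → ℝ)
    (hμ0 : ∀ i, 0 ≤ μ i) (hμ1 : ∑ i, μ i = 1)
    (C : Fin m → Fin n → ℝ) (lam : ℝ) (hlam : 0 < lam)
    (E Elam : (Fin n → ℝ) → ℝ)
    (hE : ∀ ψ, E ψ =
      ∑ i, μ i * Finset.univ.sup'
          (Finset.univ_nonempty_iff.mpr (Fin.pos_iff_nonempty.mp hn))
          (fun j => ψ j - C i j)
        - ∑ j, ν j * ψ j)
    (hElam : ∀ ψ, Elam ψ =
      lam * ∑ i, μ i * Real.log (∑ j, Real.exp ((ψ j - C i j) / lam))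
        - ∑ j, ν j * ψ j - lam * Real.log n)
    (ψs ψlam : Fin n → ℝ)
    (hmin : ∀ φ, E ψs ≤ E φ) (hminlam : ∀ φ, Elam ψlam ≤ Elam φ) :
    |E ψs - Elam ψlam| ≤ 2 * lam * Real.log n := by
  have hlogn : 0 ≤ lam * log n := mul_nonneg hlam.le (log_nonneg (by exact_mod_cast hn))
  have hsandwich : ∀ ψ, Elam ψ ≤ E ψ ∧ E ψ ≤ Elam ψ + lam * log n := by
    intro ψ
    have hne := univ_nonempty_iff.mpr (Fin.pos_iff_nonempty.mp hn)
    have hlse := fun i => mul_log_sum_exp_div_le hne (fun j => ψ j - C i j) hlam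
    have hmax := fun i => sup'_le_mul_log_sum_exp_div hne (fun j => ψ j - C i j) hlam
    simp only [Fintype.card_fin] at hlse
    rw [hE, hElam, mul_sum]
    simp only [mul_left_comm lam]
    constructor
    · linarith [sum_mul_le_sum_mul_add_of_le_add hμ0 hμ1 hlse]
    · linarith [sum_le_sum fun i (_ : i ∈ univ) => mul_le_mul_of_nonneg_left (hmax i) (hμ0 i)]
  calc |E ψs - Elam ψlam| ≤ lam * log n :=
        abs_sub_of_minimizers_le_of_le_of_le_add (fun ψ => (hsandwich ψ).1)
          (fun ψ => (hsandwich ψ).2) hmin hminlam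
    _ ≤ 2 * lam * log n := by linarith

/-- (Theorem 8 of the paper.) If ψ* minimizes the dual Kantorovich
functional E and ψ_λ* minimizes its Nesterov smoothing E_λ, then
|E(ψ*) − E_λ(ψ_λ*)| ≤ 2 λ log n. -/
theorem kantorovich_smoothing_approximation_error
    (m n : ℕ) (hm : 1 ≤ m) (hn : 1 ≤ n)
    (μ : Fin m → ℝ) (ν : Fin n → ℝ)
    (hμ0 : ∀ i, 0 ≤ μ i) (hμ1 : ∑ i, μ i = 1)
    (hν0 : ∀ j, 0 ≤ ν j) (hν1 : ∑ j, ν j = 1)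
    (C : Fin m → Fin n → ℝ) (lam : ℝ) (hlam : 0 < lam)
    (E Elam : (Fin n → ℝ) → ℝ)
    (hE : ∀ ψ, E ψ =
      ∑ i, μ i * Finset.univ.sup'
          (Finset.univ_nonempty_iff.mpr (Fin.pos_iff_nonempty.mp hn))
          (fun j => ψ j - C i j)
        - ∑ j, ν j * ψ j)
    (hElam : ∀ ψ, Elam ψ =
      lam * ∑ i, μ i * Real.log (∑ j, Real.exp ((ψ j - C i j) / lam))
        - ∑ j, ν j * ψ j - lam * Real.log n)
    (ψs ψlam : Fin n → ℝ)
    (hmin : ∀ φ, E ψs ≤ E φ) (hminlam : ∀ φ, Elam ψlam ≤ Elam φ) :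
    |E ψs - Elam ψlam| ≤ 2 * lam * Real.log n :=
  kantorovich_smoothing_approximation_error_general m n hn μ ν hμ0 hμ1 C lam hlam E Elam hE hElam ψs
    ψlam hmin hminlam
end

section
/- Let m, n ≥ 1, μ ∈ ℝ^m and ν ∈ ℝⁿ be probability vectors, C = (c_{ij}) ∈ ℝ^{m×n}, λ > 0. Define E(ψ) = Σ_{i=1}^m μ_i max_{1≤j≤n}(ψ_j − c_{ij}) − Σ_{j=1}^n ν_j ψ_j and E_λ(ψ) = λ Σ_{i=1}^m μ_i log(Σ_{j=1}^n e^{(ψ_j − c_{ij})/λ}) − Σ_{j=1}^n ν_j ψ_j − λ log n. If ψ* minimizes E over ℝⁿ and ψ_λ* minimizes E_λ over ℝⁿ, then 0 ≤ E(ψ_λ*) − E(ψ*) ≤ 2λ log n. -/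
/-!
Log-sum-exp at temperature `λ` lies between the maximum of `n` numbers and that maximum plus
`λ log n`, so `E_λ ≤ E ≤ E_λ + λ log n` pointwise (this uses `∑ μ = 1`). Hence
`E(ψ_λ*) ≤ E_λ(ψ_λ*) + λ log n ≤ E_λ(ψ*) + λ log n ≤ E(ψ*) + λ log n`.
-/

open Finset Real

section LogSumExp

variable {κ : Type*} {s : Finset κ} {lam : ℝ}

theorem sup'_le_mul_log_sum_exp_div_s13 (hs : s.Nonempty) (hlam : 0 < lam) (g : κ → ℝ) :
    s.sup' hs g ≤ lam * log (∑ j ∈ s, exp (g j / lam)) := by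
  obtain ⟨j₀, hj₀, hsup⟩ := s.exists_mem_eq_sup' hs g
  have hterm : exp (g j₀ / lam) ≤ ∑ j ∈ s, exp (g j / lam) :=
    single_le_sum (f := fun j => exp (g j / lam)) (fun j _ => (exp_pos _).le) hj₀
  have hlog : g j₀ / lam ≤ log (∑ j ∈ s, exp (g j / lam)) :=
    (le_log_iff_exp_le (sum_pos (fun j _ => exp_pos _) hs)).mpr hterm
  rw [hsup, ← div_le_iff₀' hlam]
  exact hlog

theorem mul_log_sum_exp_div_le_sup'_add (hs : s.Nonempty) (hlam : 0 < lam) (g : κ → ℝ) :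
    lam * log (∑ j ∈ s, exp (g j / lam)) ≤ s.sup' hs g + lam * log #s := by
  set M := s.sup' hs g
  have hsum : ∑ j ∈ s, exp (g j / lam) ≤ #s * exp (M / lam) := by
    calc ∑ j ∈ s, exp (g j / lam) ≤ ∑ _j ∈ s, exp (M / lam) :=
          sum_le_sum fun j hj =>
            exp_le_exp.mpr (div_le_div_of_nonneg_right (le_sup' g hj) hlam.le)
      _ = #s * exp (M / lam) := by rw [sum_const, nsmul_eq_mul]
  have hlog : log (∑ j ∈ s, exp (g j / lam)) ≤ log #s + M / lam := by
    have hcard : (0 : ℝ) < #s := by exact_mod_cast hs.card_pos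
    calc log (∑ j ∈ s, exp (g j / lam)) ≤ log (#s * exp (M / lam)) :=
          log_le_log (sum_pos (fun j _ => exp_pos _) hs) hsum
      _ = log #s + M / lam := by rw [log_mul hcard.ne' (exp_pos _).ne', log_exp]
  calc lam * log (∑ j ∈ s, exp (g j / lam)) ≤ lam * (log #s + M / lam) :=
        mul_le_mul_of_nonneg_left hlog hlam.le
    _ = M + lam * log #s := by field_simp; ring

variable {ι : Type*} [Fintype ι] {μ : ι → ℝ}

theorem sum_mul_sup'_le_mul_sum_mul_log_sum_exp_div (hs : s.Nonempty) (hlam : 0 < lam)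
    (hμ : ∀ i, 0 ≤ μ i) (g : ι → κ → ℝ) :
    ∑ i, μ i * s.sup' hs (g i) ≤ lam * ∑ i, μ i * log (∑ j ∈ s, exp (g i j / lam)) := by
  rw [mul_sum]
  refine sum_le_sum fun i _ => ?_
  rw [mul_left_comm]
  exact mul_le_mul_of_nonneg_left (sup'_le_mul_log_sum_exp_div_s13 hs hlam (g i)) (hμ i)

theorem mul_sum_mul_log_sum_exp_div_le_sum_mul_sup'_add (hs : s.Nonempty) (hlam : 0 < lam)
    (hμ : ∀ i, 0 ≤ μ i) (hμ1 : ∑ i, μ i = 1) (g : ι → κ → ℝ) :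
    lam * ∑ i, μ i * log (∑ j ∈ s, exp (g i j / lam))
      ≤ ∑ i, μ i * s.sup' hs (g i) + lam * log #s := by
  calc lam * ∑ i, μ i * log (∑ j ∈ s, exp (g i j / lam))
      = ∑ i, μ i * (lam * log (∑ j ∈ s, exp (g i j / lam))) := by
        rw [mul_sum]; exact sum_congr rfl fun i _ => mul_left_comm _ _ _
    _ ≤ ∑ i, μ i * (s.sup' hs (g i) + lam * log #s) :=
        sum_le_sum fun i _ =>
          mul_le_mul_of_nonneg_left (mul_log_sum_exp_div_le_sup'_add hs hlam (g i)) (hμ i)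
    _ = ∑ i, μ i * s.sup' hs (g i) + lam * log #s := by
        rw [sum_congr rfl fun i _ => mul_add (μ i) _ _, sum_add_distrib, ← sum_mul, hμ1,
          one_mul]

end LogSumExp

theorem le_add_of_le_of_le_add_of_forall_le {X : Type*} {F G : X → ℝ} {δ : ℝ}
    (hGF : ∀ x, G x ≤ F x) (hFG : ∀ x, F x ≤ G x + δ) {y : X} (hy : ∀ x, G y ≤ G x) (x : X) :
    F y ≤ F x + δ :=
  calc F y ≤ G y + δ := hFG y
    _ ≤ G x + δ := by linarith [hy x]
    _ ≤ F x + δ := by linarith [hGF x]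

theorem kantorovich_value_at_smoothed_minimizer_general
    (m n : ℕ) (hn : 1 ≤ n)
    (μ : Fin m → ℝ) (ν : Fin n → ℝ)
    (hμ0 : ∀ i, 0 ≤ μ i) (hμ1 : ∑ i, μ i = 1)
    (C : Fin m → Fin n → ℝ) (lam : ℝ) (hlam : 0 < lam)
    (E Elam : (Fin n → ℝ) → ℝ)
    (hE : ∀ ψ, E ψ =
      ∑ i, μ i * Finset.univ.sup'
          (Finset.univ_nonempty_iff.mpr (Fin.pos_iff_nonempty.mp hn))
          (fun j => ψ j - C i j)
        - ∑ j, ν j * ψ j)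
    (hElam : ∀ ψ, Elam ψ =
      lam * ∑ i, μ i * Real.log (∑ j, Real.exp ((ψ j - C i j) / lam))
        - ∑ j, ν j * ψ j - lam * Real.log n)
    (ψs ψlam : Fin n → ℝ)
    (hmin : ∀ φ, E ψs ≤ E φ) (hminlam : ∀ φ, Elam ψlam ≤ Elam φ) :
    0 ≤ E ψlam - E ψs ∧ E ψlam - E ψs ≤ 2 * lam * Real.log n := by
  have hne := Finset.univ_nonempty_iff.mpr (Fin.pos_iff_nonempty.mp hn)
  have hsandwich (ψ : Fin n → ℝ) : Elam ψ ≤ E ψ ∧ E ψ ≤ Elam ψ + lam * log n := by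
    have hlower := sum_mul_sup'_le_mul_sum_mul_log_sum_exp_div hne hlam hμ0
      fun i j => ψ j - C i j
    have hupper := mul_sum_mul_log_sum_exp_div_le_sum_mul_sup'_add hne hlam hμ0 hμ1
      fun i j => ψ j - C i j
    rw [card_univ, Fintype.card_fin] at hupper
    rw [hE, hElam]
    constructor <;> linarith
  have hgap := le_add_of_le_of_le_add_of_forall_le (fun ψ => (hsandwich ψ).1)
    (fun ψ => (hsandwich ψ).2) hminlam ψs
  have hlog : 0 ≤ lam * log n := mul_nonneg hlam.le (log_natCast_nonneg n)
  exact ⟨by linarith [hmin ψlam], by linarith⟩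

/-- If ψ* minimizes the dual Kantorovich functional E and ψ_λ* minimizes
its Nesterov smoothing E_λ, then 0 ≤ E(ψ_λ*) − E(ψ*) ≤ 2 λ log n. -/
theorem kantorovich_value_at_smoothed_minimizer
    (m n : ℕ) (hm : 1 ≤ m) (hn : 1 ≤ n)
    (μ : Fin m → ℝ) (ν : Fin n → ℝ)
    (hμ0 : ∀ i, 0 ≤ μ i) (hμ1 : ∑ i, μ i = 1)
    (hν0 : ∀ j, 0 ≤ ν j) (hν1 : ∑ j, ν j = 1)
    (C : Fin m → Fin n → ℝ) (lam : ℝ) (hlam : 0 < lam)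
    (E Elam : (Fin n → ℝ) → ℝ)
    (hE : ∀ ψ, E ψ =
      ∑ i, μ i * Finset.univ.sup'
          (Finset.univ_nonempty_iff.mpr (Fin.pos_iff_nonempty.mp hn))
          (fun j => ψ j - C i j)
        - ∑ j, ν j * ψ j)
    (hElam : ∀ ψ, Elam ψ =
      lam * ∑ i, μ i * Real.log (∑ j, Real.exp ((ψ j - C i j) / lam))
        - ∑ j, ν j * ψ j - lam * Real.log n)
    (ψs ψlam : Fin n → ℝ)
    (hmin : ∀ φ, E ψs ≤ E φ) (hminlam : ∀ φ, Elam ψlam ≤ Elam φ) :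
    0 ≤ E ψlam - E ψs ∧ E ψlam - E ψs ≤ 2 * lam * Real.log n :=
  kantorovich_value_at_smoothed_minimizer_general m n hn μ ν hμ0 hμ1 C lam hlam E Elam hE hElam ψs
    ψlam hmin hminlam
end
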